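/- For every positive integer n, the n-th generic stabilizer rank satisfies χ_n ≥ n + 1. -/

import Mathlib

open scoped BigOperators Classical

noncomputable section

namespace StabPaper

/-- The space `𝔽₂ⁿ` of length-`n` bitstrings. -/
abbrev F2 (n : ℕ) := Fin n → ZMod 2

/-- `A ⊆ 𝔽₂ⁿ` is a (nonempty) affine linear subspace. -/
def IsAffineSubspace {n : ℕ} (A : Set (F2 n)) : Prop :=
  A.Nonempty ∧ ∀ x ∈ A, ∀ y ∈ A, ∀ z ∈ A, x + y + z ∈ A

/-- `l : 𝔽₂ⁿ → 𝔽₂` is a linear form. -/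
def IsLinearForm {n : ℕ} (l : F2 n → ZMod 2) : Prop :=
  ∀ x y, l (x + y) = l x + l y

/-- `q : 𝔽₂ⁿ → 𝔽₂` is a quadratic form (polynomial of degree at most 2
with vanishing constant term). -/
def IsQuadraticForm {n : ℕ} (q : F2 n → ZMod 2) : Prop :=
  q 0 = 0 ∧ ∀ x y z, q (x + y + z) = q (x + y) + q (x + z) + q (y + z) + q x + q y + q z

/-- A stabilizer state vector on `n` qubits. -/
def IsStabilizerState {n : ℕ} (σ : F2 n → ℂ) : Prop :=
  ∃ (A : Set (F2 n)) (l q : F2 n → ZMod 2),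
    IsAffineSubspace A ∧ IsLinearForm l ∧ IsQuadraticForm q ∧
    ∀ x, σ x = if x ∈ A then Complex.I ^ (l x).val * (-1 : ℂ) ^ (q x).val else 0

/-- A real stabilizer state vector on `n` qubits (the case `l = 0`). -/
def IsRealStabilizerState {n : ℕ} (σ : F2 n → ℂ) : Prop :=
  ∃ (A : Set (F2 n)) (q : F2 n → ZMod 2),
    IsAffineSubspace A ∧ IsQuadraticForm q ∧
    ∀ x, σ x = if x ∈ A then (-1 : ℂ) ^ (q x).val else 0

/-- The stabilizer rank: the least `r` such that `ψ` is a `ℂ`-linear combination of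
`r` stabilizer state vectors. -/
def stabRank {n : ℕ} (ψ : F2 n → ℂ) : ℕ :=
  sInf {r : ℕ | ∃ (c : Fin r → ℂ) (σ : Fin r → (F2 n → ℂ)),
    (∀ i, IsStabilizerState (σ i)) ∧ ψ = ∑ i, c i • σ i}

/-- The real stabilizer rank: the least `r` such that `ψ` is a `ℂ`-linear combination of
`r` real stabilizer state vectors. -/
def realStabRank {n : ℕ} (ψ : F2 n → ℂ) : ℕ :=
  sInf {r : ℕ | ∃ (c : Fin r → ℂ) (σ : Fin r → (F2 n → ℂ)),
    (∀ i, IsRealStabilizerState (σ i)) ∧ ψ = ∑ i, c i • σ i}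

/-- The `n`-fold tensor power of a one-qubit vector `ψ : ℂ²`. -/
def tensorPow (ψ : ZMod 2 → ℂ) (n : ℕ) : F2 n → ℂ := fun x => ∏ i, ψ (x i)

/-- The Euclidean norm on `ℂ^{𝔽₂ⁿ}`. -/
def l2norm {n : ℕ} (φ : F2 n → ℂ) : ℝ := Real.sqrt (∑ x, ‖φ x‖ ^ 2)

/-- The δ-approximate stabilizer rank. -/
def approxStabRank {n : ℕ} (δ : ℝ) (ψ : F2 n → ℂ) : ℕ :=
  sInf {r : ℕ | ∃ φ : F2 n → ℂ, φ ≠ 0 ∧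
    l2norm (fun x => ((l2norm φ : ℝ) : ℂ)⁻¹ * φ x - ((l2norm ψ : ℝ) : ℂ)⁻¹ * ψ x) < δ ∧
    stabRank φ = r}

/-- The one-qubit vector `a·e₀ + b·e₁ ∈ ℂ²`. -/
def qubit (a b : ℂ) : ZMod 2 → ℂ := fun x => if x = 0 then a else b

/-- A nonzero `ψ ∈ ℂ²` is a one-qubit stabilizer state vector iff it is proportional to
one of `e₀, e₁, e₀+e₁, e₀−e₁, e₀+i·e₁, e₀−i·e₁`. -/
def IsQubitStabVec (ψ : ZMod 2 → ℂ) : Prop :=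
  ∃ c : ℂ, c ≠ 0 ∧ (ψ = c • qubit 1 0 ∨ ψ = c • qubit 0 1 ∨ ψ = c • qubit 1 1 ∨
    ψ = c • qubit 1 (-1) ∨ ψ = c • qubit 1 Complex.I ∨ ψ = c • qubit 1 (-Complex.I))

/-- The `n`-th generic stabilizer rank `χ_n`. -/
def genStabRank (n : ℕ) : ℕ :=
  sSup {r : ℕ | ∃ ψ : ZMod 2 → ℂ, ψ ≠ 0 ∧ stabRank (tensorPow ψ n) = r}

/-- The `n`-th generic real stabilizer rank `χ_nℝ`. -/
def genRealStabRank (n : ℕ) : ℕ :=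
  sSup {r : ℕ | ∃ ψ : ZMod 2 → ℂ, ψ ≠ 0 ∧ realStabRank (tensorPow ψ n) = r}


/-!
Take `ψ = e₀ + t·e₁` with `t` transcendental. At the point whose first `k` coordinates are `1`
and the others `0`, `ψ^{⊗n}` takes the value `tᵏ`, so `1, t, …, tⁿ` are values of `ψ^{⊗n}` that
are linearly independent over the field `ℚ̄` of algebraic numbers. Stabilizer state vectors take
values in `ℚ̄`, so if `ψ^{⊗n} = ∑_{i<r} cᵢ σᵢ` with `r ≤ n`, some nonzero `g ∈ ℚ̄ⁿ⁺¹` is orthogonal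
to the `r` vectors `(σᵢ(xₖ))ₖ`, and then `∑ gₖ tᵏ = 0`.
-/

end StabPaper

theorem Transcendental.linearIndependent_pow {R A : Type*} [CommRing R] [CommRing A]
    [Algebra R A] {t : A} (ht : Transcendental R t) :
    LinearIndependent R fun k : ℕ => t ^ k := by
  have hker : LinearMap.ker (Polynomial.aeval (R := R) t).toLinearMap = ⊥ :=
    LinearMap.ker_eq_bot.mpr (transcendental_iff_injective.mp ht)
  simpa [Function.comp_def] using
    (Polynomial.basisMonomials R).linearIndependent.map' _ hker

theorem le_of_linearIndependent_of_eq_sum {K L ι : Type*} [Field K] [Field L] [Algebra K L]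
    {m r : ℕ} {f : ι → L} {x : Fin m → ι} (hx : LinearIndependent K (f ∘ x))
    (c : Fin r → L) (σ : Fin r → ι → K) (hf : ∀ y, f y = ∑ i, c i * algebraMap K L (σ i y)) :
    m ≤ r := by
  by_contra! hrm
  let M : Matrix (Fin m) (Fin r) K := fun k i => σ i (x k)
  have hker : LinearMap.ker M.vecMulLinear ≠ ⊥ :=
    LinearMap.ker_ne_bot_of_finrank_lt (by simpa using hrm)
  obtain ⟨g, hg, hg0⟩ := (Submodule.ne_bot_iff _).mp hker
  have hgσ : ∀ i, ∑ k, g k * σ i (x k) = 0 := fun i => congrFun hg i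
  refine hg0 (funext (Fintype.linearIndependent_iff.mp hx g ?_))
  calc ∑ k, g k • f (x k)
      = ∑ i, c i * algebraMap K L (∑ k, g k * σ i (x k)) := by
        simp only [hf, map_sum, map_mul, Finset.mul_sum, Algebra.smul_def]
        rw [Finset.sum_comm]
        exact Finset.sum_congr rfl fun _ _ => Finset.sum_congr rfl fun _ _ => by ring
    _ = 0 := by simp [hgσ]

namespace StabPaper

variable {n : ℕ}

theorem isStabilizerState_single (x : F2 n) : IsStabilizerState (Pi.single x 1) := by
  refine ⟨{x}, 0, 0, ⟨⟨x, rfl⟩, ?_⟩, fun _ _ => by simp, ⟨rfl, by simp⟩, fun y => ?_⟩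
  · rintro a rfl b rfl c rfl
    have hcc : c + c = 0 := funext fun i => CharTwo.add_self_eq_zero (c i)
    simp [hcc]
  · by_cases hy : y = x <;> simp [hy]

theorem exists_stabilizer_decomposition (ψ : F2 n → ℂ) :
    ∃ (c : Fin (Fintype.card (F2 n)) → ℂ) (σ : Fin (Fintype.card (F2 n)) → F2 n → ℂ),
      (∀ i, IsStabilizerState (σ i)) ∧ ψ = ∑ i, c i • σ i := by
  let e := (Fintype.equivFin (F2 n)).symm
  refine ⟨fun i => ψ (e i), fun i => Pi.single (e i) 1,
    fun i => isStabilizerState_single (e i), ?_⟩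
  calc ψ = ∑ y, Pi.single y (ψ y) := (Finset.univ_sum_single ψ).symm
    _ = ∑ i, Pi.single (e i) (ψ (e i)) := (e.sum_comp _).symm
    _ = ∑ i, ψ (e i) • Pi.single (e i) 1 := by
      simp only [← Pi.single_smul', smul_eq_mul, mul_one]

theorem stabRank_le_card (ψ : F2 n → ℂ) : stabRank ψ ≤ Fintype.card (F2 n) :=
  Nat.sInf_le (exists_stabilizer_decomposition ψ)

theorem IsStabilizerState.mem_algebraicClosure {σ : F2 n → ℂ} (hσ : IsStabilizerState σ)
    (x : F2 n) : σ x ∈ algebraicClosure ℚ ℂ := by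
  obtain ⟨A, l, q, -, -, -, hσ⟩ := hσ
  have hI : IsIntegral ℚ Complex.I :=
    IsIntegral.of_pow two_pos (by simpa using isIntegral_one.neg)
  rw [hσ x]
  split_ifs
  · exact (hI.pow _).mul (isIntegral_one.neg.pow _)
  · exact isIntegral_zero

theorem le_stabRank_of_linearIndependent {m : ℕ} {ψ : F2 n → ℂ} {x : Fin m → F2 n}
    (hx : LinearIndependent (algebraicClosure ℚ ℂ) (ψ ∘ x)) : m ≤ stabRank ψ := by
  refine le_csInf ⟨_, exists_stabilizer_decomposition ψ⟩ ?_
  rintro r ⟨c, σ, hσ, rfl⟩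
  refine le_of_linearIndependent_of_eq_sum hx c
    (fun i y => ⟨σ i y, (hσ i).mem_algebraicClosure y⟩) fun y => ?_
  simp [Finset.sum_apply]

open Finset in
theorem tensorPow_qubit_one (t : ℂ) (x : F2 n) :
    tensorPow (qubit 1 t) n x = t ^ #{i | x i ≠ 0} := by
  simp [tensorPow, qubit, Finset.prod_ite]

theorem succ_le_stabRank_tensorPow {t : ℂ} (ht : Transcendental ℚ t) :
    n + 1 ≤ stabRank (tensorPow (qubit 1 t) n) := by
  let x : Fin (n + 1) → F2 n := fun k i => if (i : ℕ) < k then 1 else 0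
  have hx : tensorPow (qubit 1 t) n ∘ x = fun k : Fin (n + 1) => t ^ (k : ℕ) := by
    ext k
    simp [x, tensorPow_qubit_one, Fin.card_filter_val_lt, Nat.le_of_lt_succ k.isLt]
  refine le_stabRank_of_linearIndependent (x := x) ?_
  rw [hx]
  exact ht.algebraicClosure.linearIndependent_pow.comp _ Fin.val_injective

theorem stabRank_tensorPow_le_genStabRank {ψ : ZMod 2 → ℂ} (hψ : ψ ≠ 0) :
    stabRank (tensorPow ψ n) ≤ genStabRank n := by
  refine le_csSup ⟨Fintype.card (F2 n), ?_⟩ ⟨ψ, hψ, rfl⟩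
  rintro r ⟨φ, -, rfl⟩
  exact stabRank_le_card _

theorem genStabRank_lower_bound_general (n : ℕ) :
    n + 1 ≤ genStabRank n := by
  let t : ℂ := liouvilleNumber 3
  have ht : Transcendental ℚ t := by
    rw [show t = algebraMap ℝ ℂ (liouvilleNumber 3) from rfl,
      transcendental_algebraMap_iff Complex.ofReal_injective, Transcendental,
      ← IsFractionRing.isAlgebraic_iff ℤ ℚ ℝ]
    exact transcendental_liouvilleNumber (by norm_num)
  have hψ : qubit 1 t ≠ 0 := fun h => one_ne_zero (congrFun h 0)
  exact (succ_le_stabRank_tensorPow ht).trans (stabRank_tensorPow_le_genStabRank hψ)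

/-- For every positive integer `n`, the generic stabilizer rank satisfies `χ_n ≥ n + 1`. -/
theorem genStabRank_lower_bound (n : ℕ) (hn : 1 ≤ n) :
    n + 1 ≤ genStabRank n :=
  genStabRank_lower_bound_general n

end StabPaper
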